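/- arXiv:math/0510385 — 7 statements merged into one kernel-verified Lean document; each statement's English description precedes it below -/
import Mathlib

section
/- Let m, h be coprime positive integers and let A ⊆ ℤ be a semi-module for m, h (i.e., A is bounded below, m + A ⊆ A, and h + A ⊆ A). Then the set B = A \ (h + A) has exactly h elements, and these elements are pairwise incongruent modulo h. -/
/-- A semi-module for `m`, `h`: a nonempty subset of `ℤ`, bounded below,
closed under addition of `m` and of `h`. -/
def IsSemiModule (m h : ℤ) (A : Set ℤ) : Prop :=
  A.Nonempty ∧ BddBelow A ∧ (∀ a ∈ A, a + m ∈ A) ∧ (∀ a ∈ A, a + h ∈ A)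

/-- `B = A \ (h + A)`. -/
def BSet (h : ℤ) (A : Set ℤ) : Set ℤ := {a ∈ A | a - h ∉ A}

/-- A semi-module is normalized if the elements of `B = A \ (h+A)` sum to `h(h-1)/2`. -/
def IsNormalized (h : ℤ) (A : Set ℤ) : Prop :=
  ∃ s : Finset ℤ, ↑s = BSet h A ∧ ∑ a ∈ s, a = h * (h - 1) / 2

/-- `max {n : ℕ | a + m - n h ∈ A}`. -/
noncomputable def maxShift (m h : ℤ) (A : Set ℤ) (a : ℤ) : ℕ :=
  sSup {n : ℕ | a + m - n * h ∈ A}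

/-- The type of a normalized semi-module `A`:
`b 0 = min B`, and `b (i+1) = b i + m - μ' i · h` with `μ' i` the maximal
nonnegative integer such that `b (i+1) ∈ A`. -/
def HasType (m h : ℕ) (A : Set ℤ) (μ' : Fin h → ℕ) : Prop :=
  ∃ b : ℕ → ℤ,
    b 0 ∈ BSet h A ∧ (∀ x ∈ BSet h A, b 0 ≤ x) ∧
    ∀ i : Fin h,
      b (i + 1) = b i + m - μ' i * h ∧ b (i + 1) ∈ A ∧
        b i + m - (μ' i + 1) * h ∉ A

/-- Partial sum of the first `i` entries of a vector in `ℕ^h`. -/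
def psum {h : ℕ} (μ : Fin h → ℕ) (i : ℕ) : ℕ :=
  ∑ j : Fin h, if (j : ℕ) < i then μ j else 0

/-- Dominance order `ψ ⪯ χ` (with the paper's conventions, dominant vectors
are weakly increasing): all partial sums of `χ` are at most those of `ψ`,
with equal total sum. -/
def Dominates {h : ℕ} (ψ χ : Fin h → ℕ) : Prop :=
  (∀ i : ℕ, psum χ i ≤ psum ψ i) ∧ psum ψ h = psum χ h

/-- An extended semi-module `(A, φ)` for `μ`. -/
def IsExtSemiModule (m h : ℕ) (A : Set ℤ) (φ : ℤ → WithBot ℕ) (μ : Fin h → ℕ) : Prop :=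
  IsSemiModule m h A ∧ IsNormalized h A ∧
  (∀ a : ℤ, φ a = ⊥ ↔ a ∉ A) ∧
  (∀ a : ℤ, φ a + 1 ≤ φ (a + h)) ∧
  (∀ a ∈ A, φ a ≤ (maxShift m h A a : WithBot ℕ)) ∧
  (∀ a ∈ A, (∀ b : ℤ, a ≤ b → b ∈ A) → φ a = (maxShift m h A a : WithBot ℕ)) ∧
  ∃ seq : Fin h → ℕ → ℤ,
    (∀ l j, seq l j ∈ A) ∧
    (∀ a ∈ A, ∃! p : Fin h × ℕ, seq p.1 p.2 = a) ∧
    (∀ l j, φ (seq l (j + 1)) = φ (seq l j) + 1) ∧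
    (∀ l j, (φ (seq l j + h) = φ (seq l j) + 1 → seq l (j + 1) = seq l j + h) ∧
            (φ (seq l j + h) ≠ φ (seq l j) + 1 → seq l j + h < seq l (j + 1))) ∧
    ∃ σ : Equiv.Perm (Fin h), ∀ l, φ (seq l 0) = (μ (σ l) : WithBot ℕ)

/-- `(A, φ)` is cyclic: `φ a = max {n : a + m - n h ∈ A}` for all `a ∈ A`. -/
def IsCyclicExt (m h : ℕ) (A : Set ℤ) (φ : ℤ → WithBot ℕ) : Prop :=
  ∀ a ∈ A, φ a = (maxShift m h A a : WithBot ℕ)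

/-- The set `𝒱(A,φ) = {(a,b) ∈ A × A | b > a, φ a > φ b > φ (a - h)}`. -/
def Vset (h : ℕ) (A : Set ℤ) (φ : ℤ → WithBot ℕ) : Set (ℤ × ℤ) :=
  {p | p.1 ∈ A ∧ p.2 ∈ A ∧ p.1 < p.2 ∧ φ p.2 < φ p.1 ∧ φ (p.1 - h) < φ p.2}

/-- `d(b,μ) = Σ_{i=0}^{h-1} Σ_{j=1}^{i} (m/h - μ_j) - (h-1)/2`. -/
def dval (m h : ℕ) (μ : Fin h → ℕ) : ℚ :=
  (∑ i ∈ Finset.range h, ((i * m : ℚ) / h - psum μ i)) - (h - 1) / 2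


/-!
Since `A` is closed under adding `h`, an element `a ∈ A` has `a - h ∉ A` exactly when it is the
least element of `A` in its residue class modulo `h`. Every residue class meets `A`, because
`A + ℕ m ⊆ A` and `m` is invertible modulo `h`, and `A` is bounded below, so each class has a
least element. Hence reduction modulo `h` is a bijection from `B` onto `ℤ/hℤ`.
-/

open Set

theorem add_natCast_mul_mem_of_forall_add_mem {A : Set ℤ} {c : ℤ} (hc : ∀ a ∈ A, a + c ∈ A)
    {a : ℤ} (ha : a ∈ A) (k : ℕ) : a + k * c ∈ A := by
  induction k with
  | zero => simpa using ha
  | succ k ih => simpa [add_mul, add_assoc] using hc _ ih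

theorem exists_mem_intCast_eq_of_coprime {A : Set ℤ} {m h : ℕ} [NeZero h] (hcop : m.Coprime h)
    (hmA : ∀ a ∈ A, a + m ∈ A) (hA : A.Nonempty) (r : ZMod h) :
    ∃ a ∈ A, (a : ZMod h) = r := by
  obtain ⟨a, ha⟩ := hA
  set u := ZMod.unitOfCoprime m hcop
  refine ⟨a + ((r - a) * ↑u⁻¹ : ZMod h).val * m,
    add_natCast_mul_mem_of_forall_add_mem hmA ha _, ?_⟩
  have hu : (↑u⁻¹ : ZMod h) * m = 1 := by
    rw [← ZMod.coe_unitOfCoprime m hcop, Units.inv_mul]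
  push_cast [ZMod.natCast_zmod_val]
  linear_combination (r - a) * hu

theorem mem_bSet_iff_isLeast {A : Set ℤ} {h : ℕ} [NeZero h] (hhA : ∀ a ∈ A, a + h ∈ A)
    {a : ℤ} : a ∈ BSet h A ↔ IsLeast {z ∈ A | (z : ZMod h) = a} a := by
  have hh : (0 : ℤ) < h := by exact_mod_cast NeZero.pos h
  constructor
  · rintro ⟨ha, hah⟩
    refine ⟨⟨ha, rfl⟩, fun z ⟨hz, hza⟩ => ?_⟩
    obtain ⟨k, hk⟩ := (ZMod.intCast_eq_intCast_iff_dvd_sub z a h).1 hza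
    by_contra! hlt
    have hk0 : 0 < k := pos_of_mul_pos_right (hk ▸ sub_pos.2 hlt) hh.le
    obtain ⟨n, rfl⟩ : ∃ n : ℕ, k = n + 1 := ⟨(k - 1).toNat, by omega⟩
    refine hah ?_
    convert add_natCast_mul_mem_of_forall_add_mem hhA hz n using 1
    linear_combination hk
  · intro hleast
    refine ⟨hleast.1.1, fun hah => ?_⟩
    have := hleast.2 ⟨hah, by simp⟩
    omega

theorem bijOn_intCast_bSet {A : Set ℤ} {m h : ℕ} [NeZero h] (hcop : m.Coprime h)
    (hA : IsSemiModule m h A) : BijOn (fun a : ℤ => (a : ZMod h)) (BSet h A) univ := by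
  obtain ⟨hne, ⟨lb, hlb⟩, hmA, hhA⟩ := hA
  refine ⟨mapsTo_univ _ _, fun a ha b hb hab => ?_, fun r _ => ?_⟩
  · rw [mem_bSet_iff_isLeast hhA] at ha hb
    simp only at hab
    rw [hab] at ha
    exact ha.unique hb
  · obtain ⟨a, ha, rfl⟩ := exists_mem_intCast_eq_of_coprime hcop hmA hne r
    obtain ⟨b, ⟨hb, hba⟩, hleast⟩ := Int.exists_least_of_bdd
      (P := fun z => z ∈ A ∧ (z : ZMod h) = a) ⟨lb, fun z hz => hlb hz.1⟩ ⟨a, ha, rfl⟩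
    refine ⟨b, (mem_bSet_iff_isLeast hhA).2 ?_, hba⟩
    rw [hba]
    exact ⟨⟨hb, hba⟩, hleast⟩

theorem bset_card_and_incongruent_general (m h : ℕ) (hh : 0 < h)
    (hcop : Nat.Coprime m h) (A : Set ℤ) (hA : IsSemiModule m h A) :
    ∃ s : Finset ℤ, ↑s = BSet h A ∧ s.card = h ∧
      ∀ a ∈ s, ∀ b ∈ s, a % h = b % h → a = b := by
  have : NeZero h := ⟨hh.ne'⟩
  have hbij := bijOn_intCast_bSet hcop hA
  have hfin : (BSet h A).Finite := Finite.of_injOn hbij.mapsTo hbij.injOn finite_univ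
  refine ⟨hfin.toFinset, hfin.coe_toFinset, ?_, fun a ha b hb hab => ?_⟩
  · rw [← ncard_eq_toFinset_card _ hfin, ← hbij.injOn.ncard_image, hbij.image_eq, ncard_univ,
      Nat.card_zmod]
  · exact hbij.injOn (hfin.mem_toFinset.1 ha) (hfin.mem_toFinset.1 hb)
      ((ZMod.intCast_eq_intCast_iff' a b h).2 hab)

/-- `B = A \ (h + A)` has exactly `h` elements, pairwise
incongruent modulo `h`. -/
theorem bset_card_and_incongruent (m h : ℕ) (hm : 0 < m) (hh : 0 < h)
    (hcop : Nat.Coprime m h) (A : Set ℤ) (hA : IsSemiModule m h A) :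
    ∃ s : Finset ℤ, ↑s = BSet h A ∧ s.card = h ∧
      ∀ a ∈ s, ∀ b ∈ s, a % h = b % h → a = b :=
  bset_card_and_incongruent_general m h hh hcop A hA
end

section
/- Let m, h be coprime positive integers and A a semi-module for m, h with B = A \ (h + A). Then the sum of the elements of B is congruent to h(h-1)/2 modulo h; consequently the translate A' = c + A with c = -(Σ_{a∈B} a)/h + (h-1)/2 is the unique translate of A that is normalized (i.e., satisfies Σ_{a∈B'} a = h(h-1)/2 where B' = A' \ (h + A')). -/
open Finset

lemma add_natCast_mul_mem {A : Set ℤ} {d : ℤ} (hd : ∀ a ∈ A, a + d ∈ A) {a : ℤ} (ha : a ∈ A) :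
    ∀ k : ℕ, a + k * d ∈ A
  | 0 => by simpa using ha
  | k + 1 => by
    rw [Nat.cast_succ, add_one_mul, ← add_assoc]
    exact hd _ (add_natCast_mul_mem hd ha k)

lemma exists_mem_modEq_of_isCoprime {A : Set ℤ} {m h : ℤ} (hne : A.Nonempty)
    (hAm : ∀ a ∈ A, a + m ∈ A) (hmh : IsCoprime m h) (hh : h ≠ 0) (r : ℤ) :
    ∃ a ∈ A, a ≡ r [ZMOD h] := by
  obtain ⟨a₀, ha₀⟩ := hne
  obtain ⟨u, v, huv⟩ := hmh
  have hum : u * m ≡ 1 [ZMOD h] := Int.modEq_iff_dvd.2 ⟨v, by linarith⟩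
  -- `u` inverts `m` mod `h`; reducing mod `h` makes the number `k` of steps nonnegative
  set k := (r - a₀) * u % h
  have hk : 0 ≤ k := Int.emod_nonneg _ hh
  refine ⟨a₀ + k.toNat * m, add_natCast_mul_mem hAm ha₀ _, ?_⟩
  rw [Int.toNat_of_nonneg hk]
  calc a₀ + k * m ≡ a₀ + (r - a₀) * u * m [ZMOD h] := by gcongr; exact Int.mod_modEq _ _
    _ = a₀ + (r - a₀) * (u * m) := by ring
    _ ≡ a₀ + (r - a₀) * 1 [ZMOD h] := by gcongr
    _ = r := by ring

lemma mem_bSet_iff_isLeast_s1 {A : Set ℤ} {h : ℤ} (hh : 0 < h) (hAh : ∀ a ∈ A, a + h ∈ A) {a : ℤ} :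
    a ∈ BSet h A ↔ IsLeast {x ∈ A | x ≡ a [ZMOD h]} a := by
  constructor
  · rintro ⟨haA, hah⟩
    refine ⟨⟨haA, rfl⟩, fun x ⟨hxA, hxa⟩ => ?_⟩
    by_contra! hax
    obtain ⟨t, ht⟩ := hxa.dvd
    have ht : 1 ≤ t := by nlinarith
    apply hah
    convert add_natCast_mul_mem hAh hxA (t - 1).toNat using 1
    rw [Int.toNat_of_nonneg (by omega)]
    linarith
  · rintro ⟨⟨haA, -⟩, hleast⟩
    refine ⟨haA, fun hah => ?_⟩
    have := hleast ⟨hah, Int.modEq_iff_dvd.2 ⟨1, by ring⟩⟩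
    linarith

lemma IsSemiModule.existsUnique_mem_bSet_modEq {m h : ℤ} {A : Set ℤ} (hA : IsSemiModule m h A)
    (hh : 0 < h) (hmh : IsCoprime m h) (r : ℤ) : ∃! a, a ∈ BSet h A ∧ a ≡ r [ZMOD h] := by
  obtain ⟨hne, hbdd, hAm, hAh⟩ := hA
  set S := {x ∈ A | x ≡ r [ZMOD h]}
  have hclass {a : ℤ} (har : a ≡ r [ZMOD h]) : {x ∈ A | x ≡ a [ZMOD h]} = S :=
    Set.ext fun x => and_congr_right fun _ => ⟨fun hx => hx.trans har, fun hx => hx.trans har.symm⟩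
  have hSne : S.Nonempty := exists_mem_modEq_of_isCoprime hne hAm hmh hh.ne' r
  have hSbdd : BddBelow S := hbdd.mono fun _ hx => hx.1
  have hleast : IsLeast S (sInf S) := ⟨Int.csInf_mem hSne hSbdd, fun _ hx => csInf_le hSbdd hx⟩
  refine ⟨sInf S, ⟨?_, hleast.1.2⟩, fun a ⟨haB, har⟩ => ?_⟩
  · rwa [mem_bSet_iff_isLeast_s1 hh hAh, hclass hleast.1.2]
  · rw [mem_bSet_iff_isLeast_s1 hh hAh, hclass har] at haB
    exact haB.unique hleast

lemma card_eq_and_sum_emod_eq {h : ℕ} (hh : 0 < h) {s : Finset ℤ}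
    (hs : ∀ r, ∃! a, a ∈ s ∧ a ≡ r [ZMOD h]) :
    #s = h ∧ ∑ a ∈ s, a % h = ∑ r ∈ range h, (r : ℤ) := by
  have hh' : (h : ℤ) ≠ 0 := by positivity
  set residue : ℤ → ℕ := fun a => (a % h).toNat
  have hmaps : Set.MapsTo residue s (range h) := fun a _ => by
    have := Int.emod_lt_of_pos a (by positivity : (0 : ℤ) < h)
    simp only [coe_range, Set.mem_Iio, residue]
    omega
  have hinj : Set.InjOn residue s := fun a ha b hb hab => by
    have hab : a ≡ b [ZMOD h] := by
      simp only [residue] at hab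
      have := Int.emod_nonneg a hh'
      have := Int.emod_nonneg b hh'
      exact (show a % h = b % h by omega)
    exact (hs b).unique ⟨ha, hab⟩ ⟨hb, rfl⟩
  have hsurj : Set.SurjOn residue s (range h) := fun r hr => by
    obtain ⟨a, ⟨ha, har⟩, -⟩ := hs r
    refine ⟨a, ha, ?_⟩
    have hr : (r : ℤ) < h := by simpa using hr
    simp only [residue, har.eq, Int.emod_eq_of_lt (Nat.cast_nonneg r) hr, Int.toNat_natCast]
  refine ⟨(card_nbij residue hmaps hinj hsurj).trans (card_range h),
    sum_nbij residue hmaps hinj hsurj fun a _ => ?_⟩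
  exact (Int.toNat_of_nonneg (Int.emod_nonneg a hh')).symm

lemma sum_range_intCast_eq (h : ℕ) : ∑ r ∈ range h, (r : ℤ) = h * (h - 1) / 2 := by
  have := sum_range_id_mul_two h
  rcases Nat.eq_zero_or_pos h with rfl | hh
  · simp
  · zify [hh] at this
    rw [← Nat.cast_sum] at *
    omega

lemma bSet_image_add_left (h c : ℤ) (A : Set ℤ) :
    BSet h ((c + ·) '' A) = (c + ·) '' BSet h A := by
  ext x
  simp only [BSet, Set.image_add_left, Set.mem_preimage, Set.mem_ofPred_eq]
  ring_nf

lemma isNormalized_image_add_left_iff {h c : ℤ} {A : Set ℤ} {s : Finset ℤ}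
    (hs : ↑s = BSet h A) :
    IsNormalized h ((c + ·) '' A) ↔ #s * c + ∑ a ∈ s, a = h * (h - 1) / 2 := by
  have hs' : ↑(s.map (addLeftEmbedding c)) = BSet h ((c + ·) '' A) := by
    rw [bSet_image_add_left, ← hs, coe_map]
    rfl
  have hsum : ∑ a ∈ s.map (addLeftEmbedding c), a = #s * c + ∑ a ∈ s, a := by
    rw [sum_map]
    simp only [addLeftEmbedding_apply]
    rw [sum_add_distrib, sum_const, nsmul_eq_mul]
  constructor
  · rintro ⟨t, ht, htsum⟩
    rwa [coe_injective (ht.trans hs'.symm), hsum] at htsum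
  · exact fun hsum' => ⟨_, hs', hsum.trans hsum'⟩

theorem normalization_exists_unique_general (m h : ℕ) (hh : 0 < h)
    (hcop : Nat.Coprime m h) (A : Set ℤ) (hA : IsSemiModule m h A)
    (s : Finset ℤ) (hs : ↑s = BSet h A) :
    ((h : ℤ) ∣ (∑ a ∈ s, a) - h * (h - 1) / 2) ∧
      ∀ c : ℤ, IsNormalized h ((fun a => c + a) '' A) ↔
        (h : ℤ) * c = (h : ℤ) * (h - 1) / 2 - ∑ a ∈ s, a := by
  have hrep : ∀ r, ∃! a, a ∈ s ∧ a ≡ r [ZMOD h] := by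
    simpa only [← mem_coe, hs] using
      hA.existsUnique_mem_bSet_modEq (by positivity) (Nat.isCoprime_iff_coprime.2 hcop)
  obtain ⟨hcard, hresidues⟩ := card_eq_and_sum_emod_eq hh hrep
  refine ⟨?_, fun c => ?_⟩
  · rw [← sum_range_intCast_eq, ← hresidues, ← sum_sub_distrib]
    exact dvd_sum fun a _ => ⟨a / h, by rw [Int.emod_def]; ring⟩
  · rw [isNormalized_image_add_left_iff hs, hcard]
    constructor <;> intro <;> linarith

/-- the sum of the elements of `B` is congruent to `h(h-1)/2`
modulo `h`, and the translate `c + A` with `h·c = h(h-1)/2 - Σ_{a∈B} a`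
is the unique translate of `A` that is normalized. -/
theorem normalization_exists_unique (m h : ℕ) (hm : 0 < m) (hh : 0 < h)
    (hcop : Nat.Coprime m h) (A : Set ℤ) (hA : IsSemiModule m h A)
    (s : Finset ℤ) (hs : ↑s = BSet h A) :
    ((h : ℤ) ∣ (∑ a ∈ s, a) - h * (h - 1) / 2) ∧
      ∀ c : ℤ, IsNormalized h ((fun a => c + a) '' A) ↔
        (h : ℤ) * c = (h : ℤ) * (h - 1) / 2 - ∑ a ∈ s, a :=
  normalization_exists_unique_general m h hh hcop A hA s hs
end

section
/- Let m, h be coprime positive integers and A a normalized semi-module for m, h. Define b₀ = min B where B = A \ (h + A), and inductively bᵢ = b_{i-1} + m - μ'ᵢ h where μ'ᵢ is the maximal nonnegative integer with b_{i-1} + m - μ'ᵢ h ∈ A. Then b_h = b₀ and {b₀, ..., b_{h-1}} = B. -/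
/-!
Since `A` is closed under `+ h`, an element of `B` is the least element of `A` in its residue
class modulo `h`, so `B` meets each residue class at most once. Maximality of `μ'ᵢ` says exactly
that `bᵢ - h ∉ A`, so every `bᵢ` lies in `B`; and `bᵢ ≡ b₀ + i m (mod h)`. As `m` is a unit
modulo `h`, `b₀, …, b_{h-1}` run through all residue classes, and `b_h` falls into that of `b₀`.
-/

lemma add_nat_mul_mem {A : Set ℤ} {c : ℤ} (hc : ∀ a ∈ A, a + c ∈ A) {a : ℤ} (ha : a ∈ A) :
    ∀ n : ℕ, a + n * c ∈ A
  | 0 => by simpa using ha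
  | n + 1 => by
    have := hc _ (add_nat_mul_mem hc ha n)
    rwa [add_assoc, ← add_one_mul, ← Nat.cast_succ] at this

lemma BSet.eq_of_modEq {h : ℤ} (hh : 0 < h) {A : Set ℤ} (hAh : ∀ a ∈ A, a + h ∈ A)
    {x y : ℤ} (hx : x ∈ BSet h A) (hy : y ∈ BSet h A) (hxy : x ≡ y [ZMOD h]) : x = y := by
  wlog hle : x ≤ y generalizing x y
  · exact (this hy hx hxy.symm (le_of_not_ge hle)).symm
  obtain ⟨k, hk⟩ := Int.modEq_iff_add_fac.mp hxy
  have hk0 : 0 ≤ k := by nlinarith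
  rcases hk0.eq_or_lt with rfl | hk1
  · simpa using hk.symm
  exfalso
  apply hy.2
  have := add_nat_mul_mem hAh hx.1 (k - 1).toNat
  rwa [Int.toNat_of_nonneg (by omega), show x + (k - 1) * h = y - h by rw [hk]; ring] at this

lemma Int.exists_lt_modEq_add_mul {m h : ℕ} (hh : 0 < h) (hcop : Nat.Coprime m h) (c x : ℤ) :
    ∃ i < h, x ≡ c + i * m [ZMOD h] := by
  obtain ⟨u, v, huv⟩ := Int.isCoprime_iff_gcd_eq_one.mpr (by simpa using hcop : Int.gcd m h = 1)
  obtain ⟨j, hj⟩ : ∃ j, j = (x - c) * u % h := ⟨_, rfl⟩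
  have hj0 : 0 ≤ j := hj ▸ Int.emod_nonneg _ (by omega)
  have hjh : j < h := hj ▸ Int.emod_lt_of_pos _ (by omega)
  refine ⟨j.toNat, by omega, ?_⟩
  rw [Int.toNat_of_nonneg hj0, Int.modEq_iff_dvd]
  exact ⟨-(x - c) * v - (x - c) * u / h * m, by
    linear_combination (m : ℤ) * (hj.trans (Int.emod_def _ _)) + (x - c) * huv⟩

lemma modEq_add_nat_mul_of_succ_modEq {b : ℕ → ℤ} {m n : ℤ} {k : ℕ}
    (hstep : ∀ i < k, b (i + 1) ≡ b i + m [ZMOD n]) : ∀ i ≤ k, b i ≡ b 0 + i * m [ZMOD n]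
  | 0, _ => by simp [Int.ModEq.refl]
  | i + 1, hi => calc
      b (i + 1) ≡ b i + m [ZMOD n] := hstep i hi
      _ ≡ b 0 + i * m + m [ZMOD n] :=
        (modEq_add_nat_mul_of_succ_modEq hstep i (by omega)).add_right m
      _ = b 0 + ↑(i + 1) * m := by push_cast; ring

theorem type_recursion_cycles_general (m h : ℕ) (hh : 0 < h)
    (hcop : Nat.Coprime m h) (A : Set ℤ) (hA : IsSemiModule m h A)
    (b : ℕ → ℤ) (μ' : ℕ → ℤ)
    (hb0 : b 0 ∈ BSet h A)
    (hrec : ∀ i < h, 0 ≤ μ' (i + 1) ∧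
      b (i + 1) = b i + m - μ' (i + 1) * h ∧ b (i + 1) ∈ A ∧
        b i + m - (μ' (i + 1) + 1) * h ∉ A) :
    b h = b 0 ∧ {x : ℤ | ∃ i < h, b i = x} = BSet h A := by
  have hB : ∀ i ≤ h, b i ∈ BSet h A
    | 0, _ => hb0
    | i + 1, hi => by
      obtain ⟨-, hb, hmem, hnot⟩ := hrec i hi
      refine ⟨hmem, ?_⟩
      rwa [hb, show b i + m - μ' (i + 1) * h - h = b i + m - (μ' (i + 1) + 1) * h by ring]
  have hcong : ∀ i ≤ h, b i ≡ b 0 + i * m [ZMOD h] :=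
    modEq_add_nat_mul_of_succ_modEq fun i hi =>
      Int.modEq_iff_add_fac.mpr ⟨μ' (i + 1), by rw [(hrec i hi).2.1]; ring⟩
  have hB_eq : ∀ i ≤ h, ∀ x ∈ BSet h A, x ≡ b 0 + i * m [ZMOD h] → b i = x :=
    fun i hi x hx hxi =>
      BSet.eq_of_modEq (by omega) hA.2.2.2 (hB i hi) hx ((hcong i hi).trans hxi.symm)
  refine ⟨hB_eq h le_rfl _ hb0 Int.modEq_add_fac_self.symm, Set.ext fun x => ⟨?_, fun hx => ?_⟩⟩
  · rintro ⟨i, hi, rfl⟩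
    exact hB i hi.le
  · obtain ⟨i, hi, hxi⟩ := Int.exists_lt_modEq_add_mul hh hcop (b 0) x
    exact ⟨i, hi, hB_eq i hi.le x hx hxi⟩

/-- for a normalized semi-module, the recursion
`b₀ = min B`, `bᵢ = b_{i-1} + m - μ'ᵢ h` (with `μ'ᵢ` maximal nonnegative
such that `bᵢ ∈ A`) satisfies `b_h = b₀` and `{b₀,…,b_{h-1}} = B`. -/
theorem type_recursion_cycles (m h : ℕ) (hm : 0 < m) (hh : 0 < h)
    (hcop : Nat.Coprime m h) (A : Set ℤ) (hA : IsSemiModule m h A)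
    (hnorm : IsNormalized h A) (b : ℕ → ℤ) (μ' : ℕ → ℤ)
    (hb0 : b 0 ∈ BSet h A) (hb0min : ∀ x ∈ BSet h A, b 0 ≤ x)
    (hrec : ∀ i < h, 0 ≤ μ' (i + 1) ∧
      b (i + 1) = b i + m - μ' (i + 1) * h ∧ b (i + 1) ∈ A ∧
        b i + m - (μ' (i + 1) + 1) * h ∉ A) :
    b h = b 0 ∧ {x : ℤ | ∃ i < h, b i = x} = BSet h A :=
  type_recursion_cycles_general m h hh hcop A hA b μ' hb0 hrec
end

section
/- Given μ' ∈ ℕ^h with ν ⪯ μ' (ν = (m/h,...,m/h), gcd(m,h)=1), define b₀ = 0 and bᵢ = b_{i-1} + m - μ'ᵢ h for i = 1,...,h-1, and set A₀ = {bᵢ + αh : α ∈ ℕ, 0 ≤ i < h}. Then A₀ is a semi-module for m, h whose normalization has type μ'. -/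
/-!
Because `psum μ' h = m`, the recursion closes up (`b h = b 0`), so adding `m` to `b i + α h`
lands in `b (i+1) + (α + μ' i) h`: the set is a semi-module, and the dominance inequalities say
exactly that `b i ≥ 0 = b 0`. Modulo `h` one has `b i ≡ i m`, so by coprimality the `b i` form a
complete residue system. Hence `B = {b i}` (also after any translation), and
`∑ b i ≡ ∑ i = h (h - 1) / 2 (mod h)`, which makes the normalizing shift an integer.
-/

open Function

def progressionUnion {ι : Type*} (h : ℕ) (b : ι → ℤ) : Set ℤ :=
  {x | ∃ i, ∃ α : ℕ, x = b i + α * h}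

section progressionUnion

variable {ι : Type*} {h : ℕ} (b : ι → ℤ)

theorem image_add_progressionUnion (c : ℤ) :
    (fun a => c + a) '' progressionUnion h b = progressionUnion h (fun i => c + b i) := by
  ext x
  constructor
  · rintro ⟨_, ⟨i, α, rfl⟩, rfl⟩
    exact ⟨i, α, by ring⟩
  · rintro ⟨i, α, rfl⟩
    exact ⟨b i + α * h, ⟨i, α, rfl⟩, by ring⟩

theorem isSemiModule_progressionUnion [Finite ι] [Nonempty ι] {m : ℤ}
    (hstep : ∀ i, ∃ j, ∃ k : ℕ, b i + m = b j + k * h) :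
    IsSemiModule m h (progressionUnion h b) := by
  refine ⟨⟨b (Classical.arbitrary ι), Classical.arbitrary ι, 0, by simp⟩, ?_, ?_, ?_⟩
  · obtain ⟨l, hl⟩ := (Set.finite_range b).bddBelow
    refine ⟨l, ?_⟩
    rintro _ ⟨i, α, rfl⟩
    have := hl ⟨i, rfl⟩
    nlinarith [Int.natCast_nonneg α, Int.natCast_nonneg h]
  · rintro _ ⟨i, α, rfl⟩
    obtain ⟨j, k, hjk⟩ := hstep i
    exact ⟨j, α + k, by push_cast; linarith⟩
  · rintro _ ⟨i, α, rfl⟩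
    exact ⟨i, α + 1, by push_cast; ring⟩

variable {b}

theorem bset_progressionUnion (hh : 0 < h) (hb : Injective fun i => (b i : ZMod h)) :
    BSet h (progressionUnion h b) = Set.range b := by
  ext x
  constructor
  · rintro ⟨⟨i, α, rfl⟩, hx⟩
    cases α with
    | zero => exact ⟨i, by simp⟩
    | succ α => exact absurd ⟨i, α, by push_cast; ring⟩ hx
  · rintro ⟨j, rfl⟩
    refine ⟨⟨j, 0, by simp⟩, ?_⟩
    rintro ⟨i, α, hij⟩
    -- reducing `b j - h = b i + α h` modulo `h` gives `i = j`
    obtain rfl : i = j := hb <| by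
      have := congrArg (Int.cast : ℤ → ZMod h) hij
      push_cast [ZMod.natCast_self] at this
      simpa using this.symm
    nlinarith [Int.natCast_nonneg α, (Int.natCast_pos.mpr hh : (0 : ℤ) < h)]

theorem isNormalized_progressionUnion [Fintype ι] (hh : 0 < h)
    (hb : Injective fun i => (b i : ZMod h)) (hsum : ∑ i, b i = h * (h - 1) / 2) :
    IsNormalized h (progressionUnion h b) := by
  classical
  have hinj : Injective b := fun i j hij => hb (congrArg _ hij)
  refine ⟨Finset.univ.image b, ?_, ?_⟩
  · rw [bset_progressionUnion hh hb, Finset.coe_image, Finset.coe_univ, Set.image_univ]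
  · rwa [Finset.sum_image hinj.injOn]

end progressionUnion

theorem hasType_of_mem_bset {m h : ℕ} {A : Set ℤ} {μ' : Fin h → ℕ} (b : ℕ → ℤ)
    (hB : ∀ n ≤ h, b n ∈ BSet h A) (hmin : ∀ x ∈ BSet h A, b 0 ≤ x)
    (hrec : ∀ i : Fin h, b (i + 1) = b i + m - μ' i * h) :
    HasType m h A μ' := by
  refine ⟨b, hB 0 (Nat.zero_le _), hmin, fun i => ⟨hrec i, (hB _ i.isLt).1, ?_⟩⟩
  have hsub := (hB _ i.isLt).2
  rwa [hrec i, show b i + m - μ' i * h - h = b i + m - (μ' i + 1) * h by ring] at hsub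

/-- Two complete residue systems modulo `h` have congruent sums. -/
theorem dvd_sum_sub_sum_of_injective_zmod {ι : Type*} [Fintype ι] {h : ℕ} [NeZero h]
    (hcard : Fintype.card ι = h) {f g : ι → ℤ}
    (hf : Injective fun i => (f i : ZMod h)) (hg : Injective fun i => (g i : ZMod h)) :
    (h : ℤ) ∣ ∑ i, f i - ∑ i, g i := by
  have hbij {f : ι → ℤ} (hf : Injective fun i => (f i : ZMod h)) :
      Bijective fun i => (f i : ZMod h) :=
    hf.bijective_of_nat_card_le (by simp [hcard])
  have hsum {f : ι → ℤ} (hf : Injective fun i => (f i : ZMod h)) :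
      ((∑ i, f i : ℤ) : ZMod h) = ∑ x : ZMod h, x := by
    push_cast
    exact Fintype.sum_bijective _ (hbij hf) _ _ fun _ => rfl
  rw [← ZMod.intCast_zmod_eq_zero_iff_dvd, Int.cast_sub, hsum hf, hsum hg, sub_self]

theorem Fin.sum_val_intCast (n : ℕ) : ∑ i : Fin n, (i : ℤ) = n * (n - 1) / 2 := by
  rw [Fin.sum_univ_eq_sum_range (fun i => (i : ℤ)), ← Nat.cast_sum]
  refine (Int.ediv_eq_of_eq_mul_left two_ne_zero ?_).symm
  rcases n with _ | n
  · simp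
  · have := Finset.sum_range_id_mul_two (n + 1)
    rw [Nat.add_sub_cancel] at this
    rw [← Nat.cast_two, ← Nat.cast_mul, this]
    push_cast
    ring

theorem injective_natCast_mul_zmod {m h : ℕ} (hcop : m.Coprime h) :
    Injective fun i : Fin h => ((i : ℕ) : ZMod h) * m := by
  intro i j hij
  have := ((ZMod.isUnit_iff_coprime m h).mpr hcop).mul_right_cancel hij
  rw [ZMod.natCast_eq_natCast_iff', Nat.mod_eq_of_lt i.isLt, Nat.mod_eq_of_lt j.isLt] at this
  exact Fin.ext this

theorem psum_succ {h : ℕ} (μ : Fin h → ℕ) {n : ℕ} (hn : n < h) :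
    psum μ (n + 1) = psum μ n + μ ⟨n, hn⟩ := by
  have hsplit (j : Fin h) : (if (j : ℕ) < n + 1 then μ j else 0)
      = (if (j : ℕ) < n then μ j else 0) + (if j = ⟨n, hn⟩ then μ j else 0) := by
    rcases eq_or_ne j ⟨n, hn⟩ with rfl | hj
    · simp
    · have : (j : ℕ) ≠ n := fun hc => hj (Fin.ext hc)
      split_ifs <;> omega
  simp only [psum, hsplit, Finset.sum_add_distrib, Finset.sum_ite_eq', Finset.mem_univ, if_true]

theorem eq_sub_psum_of_rec {m h : ℕ} {μ' : Fin h → ℕ} {b : ℕ → ℤ} (hb0 : b 0 = 0)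
    (hrec : ∀ i : Fin h, b (i + 1) = b i + m - μ' i * h) :
    ∀ n ≤ h, b n = n * m - h * psum μ' n
  | 0, _ => by simp [hb0, psum]
  | n + 1, hn => by
    rw [hrec ⟨n, hn⟩, Fin.val_mk, eq_sub_psum_of_rec hb0 hrec n (by omega), psum_succ μ' hn]
    push_cast
    ring

theorem exists_fin_eq_of_rec {m h : ℕ} (hh : 0 < h) {μ' : Fin h → ℕ} (hμ' : psum μ' h = m)
    {b : ℕ → ℤ} (hb0 : b 0 = 0) (hrec : ∀ i : Fin h, b (i + 1) = b i + m - μ' i * h) :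
    ∀ n ≤ h, ∃ j : Fin h, b n = b j := by
  intro n hn
  rcases hn.lt_or_eq with hn | rfl
  · exact ⟨⟨n, hn⟩, rfl⟩
  · exact ⟨⟨0, hh⟩, by rw [eq_sub_psum_of_rec hb0 hrec n le_rfl, hμ', hb0]; ring⟩

theorem injective_zmod_of_rec {m h : ℕ} (hcop : m.Coprime h) {μ' : Fin h → ℕ} {b : ℕ → ℤ}
    (hb0 : b 0 = 0) (hrec : ∀ i : Fin h, b (i + 1) = b i + m - μ' i * h) :
    Injective fun i : Fin h => (b i : ZMod h) := by
  convert injective_natCast_mul_zmod hcop using 2 with i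
  rw [eq_sub_psum_of_rec hb0 hrec i i.isLt.le]
  push_cast [ZMod.natCast_self]
  ring

theorem construction_from_type_general (m h : ℕ) (hh : 0 < h)
    (hcop : Nat.Coprime m h) (μ' : Fin h → ℕ)
    (hdom : (∀ i < h, (h : ℤ) * psum μ' i ≤ i * m) ∧ psum μ' h = m)
    (b : ℕ → ℤ) (hb0 : b 0 = 0)
    (hrec : ∀ i : Fin h, b (i + 1) = b i + m - μ' i * h)
    (A₀ : Set ℤ) (hA₀ : A₀ = {x : ℤ | ∃ i : Fin h, ∃ α : ℕ, x = b i + α * h}) :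
    IsSemiModule m h A₀ ∧
      ∃ c : ℤ, IsNormalized h ((fun a => c + a) '' A₀) ∧
        HasType m h ((fun a => c + a) '' A₀) μ' := by
  obtain rfl : A₀ = progressionUnion h fun i : Fin h => b i := hA₀
  have : NeZero h := ⟨hh.ne'⟩
  have hwrap := exists_fin_eq_of_rec hh hdom.2 hb0 hrec
  have hres := injective_zmod_of_rec hcop hb0 hrec
  have hnonneg (n : Fin h) : 0 ≤ b n := by
    linarith [eq_sub_psum_of_rec hb0 hrec n n.isLt.le, hdom.1 n n.isLt]
  refine ⟨isSemiModule_progressionUnion _ fun i => ?_, ?_⟩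
  · obtain ⟨j, hj⟩ := hwrap _ i.isLt
    exact ⟨j, μ' i, by linarith [hrec i]⟩
  have hid : Injective fun i : Fin h => (((i : ℕ) : ℤ) : ZMod h) := by
    simpa using injective_natCast_mul_zmod (Nat.coprime_one_left h)
  obtain ⟨c, hc⟩ := dvd_sum_sub_sum_of_injective_zmod (Fintype.card_fin h) hid hres
  have hres' : Injective fun i : Fin h => ((c + b i : ℤ) : ZMod h) := fun i j hij =>
    hres (by simpa using hij)
  refine ⟨c, ?_⟩
  rw [image_add_progressionUnion]
  refine ⟨isNormalized_progressionUnion hh hres' ?_,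
    hasType_of_mem_bset (fun n => c + b n) ?_ ?_ fun i => by linarith [hrec i]⟩
  · simp only [Finset.sum_add_distrib, Finset.sum_const, Finset.card_univ, Fintype.card_fin,
      nsmul_eq_mul, ← Fin.sum_val_intCast]
    linarith
  · intro n hn
    obtain ⟨j, hj⟩ := hwrap n hn
    exact (bset_progressionUnion hh hres').symm ▸ ⟨j, by simp [hj]⟩
  · rw [bset_progressionUnion hh hres']
    rintro _ ⟨i, rfl⟩
    simp [hb0, hnonneg i]

/-- given `μ' ∈ ℕ^h` with `ν ⪯ μ'`, the set
`A₀ = {bᵢ + α h}` (with `b₀ = 0`, `bᵢ = b_{i-1} + m - μ'ᵢ h`) is a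
semi-module for `m`, `h` whose normalization has type `μ'`. -/
theorem construction_from_type (m h : ℕ) (hm : 0 < m) (hh : 0 < h)
    (hcop : Nat.Coprime m h) (μ' : Fin h → ℕ)
    (hdom : (∀ i < h, (h : ℤ) * psum μ' i ≤ i * m) ∧ psum μ' h = m)
    (b : ℕ → ℤ) (hb0 : b 0 = 0)
    (hrec : ∀ i : Fin h, b (i + 1) = b i + m - μ' i * h)
    (A₀ : Set ℤ) (hA₀ : A₀ = {x : ℤ | ∃ i : Fin h, ∃ α : ℕ, x = b i + α * h}) :
    IsSemiModule m h A₀ ∧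
      ∃ c : ℤ, IsNormalized h ((fun a => c + a) '' A₀) ∧
        HasType m h ((fun a => c + a) '' A₀) μ' :=
  construction_from_type_general m h hh hcop μ' hdom b hb0 hrec A₀ hA₀
end

section
/- If μ ∈ ℕ^h is dominant minuscule (all μᵢ ∈ {0,1}) with Σμᵢ = m and gcd(m,h) = 1, then every extended semi-module (A, φ) for μ is cyclic. -/
/-!
Since `φ ≤ maxShift` on `A`, it suffices to show that the sublevel sets `{φ ≤ w}` and
`{maxShift ≤ w}` have the same finite size. The chains `seq l` start at level `μ (σ l) ≤ 1` and
climb by one, so `{φ ≤ w}` has exactly `(w + 1) h - m` elements. On the other side,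
`{maxShift ≤ w}` is `A \ (t + A)` for `t = (w + 1) h - m`; as `A` is cofinite (`gcd(m, h) = 1`),
it contains the least element of `A` in each residue class modulo `t`, so it has at least `t`
elements.
-/

theorem Nat.exists_eq_mul_add_mul_of_coprime {m h : ℕ} (hcop : m.Coprime h) (hh : h ≠ 0)
    {n : ℕ} (hn : m * h ≤ n) : ∃ i j : ℕ, n = m * i + h * j := by
  obtain ⟨i, hi, hmod⟩ := Nat.exists_mul_mod_eq_of_coprime n hcop hh
  have hle : m * i ≤ n := (Nat.mul_le_mul_left m hi.le).trans hn
  obtain ⟨j, hj⟩ : h ∣ n - m * i :=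
    Nat.dvd_of_mod_eq_zero (Nat.sub_mod_eq_zero_of_mod_eq hmod.symm)
  exact ⟨i, j, by omega⟩

theorem le_encard_BSet {A : Set ℤ} (hbdd : BddBelow A) {U : ℤ} (hU : ∀ x, U ≤ x → x ∈ A)
    (t : ℕ) : (t : ℕ∞) ≤ (BSet t A).encard := by
  obtain ⟨L, hL⟩ := hbdd
  have hleast : ∀ r < t, ∃ b ∈ BSet t A, b % (t : ℤ) = r := by
    intro r hr
    have hclass : ∃ z, z ∈ A ∧ z % (t : ℤ) = r := by
      refine ⟨r + t * U.toNat, hU _ ?_, ?_⟩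
      · nlinarith [Int.self_le_toNat U, Int.natCast_nonneg r]
      · rw [Int.add_mul_emod_self_left]
        exact Int.emod_eq_of_lt (Int.natCast_nonneg r) (by exact_mod_cast hr)
    obtain ⟨b, ⟨hbA, hbr⟩, hbmin⟩ := Int.exists_least_of_bdd ⟨L, fun z hz => hL hz.1⟩ hclass
    refine ⟨b, ⟨hbA, fun hbt => ?_⟩, hbr⟩
    have := hbmin (b - t) ⟨hbt, by rw [Int.sub_emod, Int.emod_self, sub_zero, Int.emod_emod, hbr]⟩
    omega
  choose! g hgB hgr using hleast
  calc (t : ℕ∞) = (Set.Iio t).encard := by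
        rw [← Finset.coe_range, Set.encard_coe_eq_coe_finsetCard, Finset.card_range]
    _ ≤ (BSet t A).encard := by
      refine Set.encard_le_encard_of_injOn (fun r hr => hgB r hr) fun r hr s hs hrs => ?_
      have := hgr r hr
      rw [hrs, hgr s hs] at this
      exact_mod_cast this.symm

namespace IsSemiModule

variable {m h : ℕ} {A : Set ℤ}

theorem add_mul_add_mul_mem (hA : IsSemiModule m h A) {a : ℤ} (ha : a ∈ A) (i j : ℕ) :
    a + m * i + h * j ∈ A := by
  have hi : ∀ i : ℕ, a + m * i ∈ A := by
    intro i
    induction i with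
    | zero => simpa using ha
    | succ i ih => convert hA.2.2.1 _ ih using 1; push_cast; ring
  induction j with
  | zero => simpa using hi i
  | succ j ih => convert hA.2.2.2 _ ih using 1; push_cast; ring

theorem exists_forall_ge_mem (hA : IsSemiModule m h A) (hcop : m.Coprime h) (hh : h ≠ 0) :
    ∃ U : ℤ, ∀ x, U ≤ x → x ∈ A := by
  obtain ⟨a, ha⟩ := hA.1
  refine ⟨a + m * h, fun x hx => ?_⟩
  have : (0 : ℤ) ≤ m * h := by positivity
  obtain ⟨n, rfl⟩ : ∃ n : ℕ, x = a + n := ⟨(x - a).toNat, by omega⟩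
  obtain ⟨i, j, rfl⟩ := Nat.exists_eq_mul_add_mul_of_coprime hcop hh (n := n) (by omega)
  simpa [add_assoc] using hA.add_mul_add_mul_mem ha i j

theorem maxShift_le_iff (hA : IsSemiModule m h A) (hh : 0 < h) {a : ℤ} (ha : a ∈ A) (v : ℕ) :
    maxShift m h A a ≤ v ↔ a + m - (v + 1) * h ∉ A := by
  obtain ⟨L, hL⟩ := hA.2.1
  have hbdd : BddAbove {n : ℕ | a + m - n * h ∈ A} := by
    refine ⟨(a + m - L).toNat, fun n hn => ?_⟩
    have := hL hn
    have : (n : ℤ) ≤ n * h := le_mul_of_one_le_right (Int.natCast_nonneg n) (by omega)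
    omega
  have h0 : 0 ∈ {n : ℕ | a + m - n * h ∈ A} := by simpa using hA.2.2.1 a ha
  rw [maxShift, csSup_le_iff hbdd ⟨0, h0⟩]
  refine ⟨fun hle hv => by simpa using hle (v + 1) (by simpa using hv), fun hv n hn => ?_⟩
  by_contra! hvn
  obtain ⟨k, rfl⟩ := Nat.exists_eq_add_of_lt hvn
  refine hv ?_
  convert hA.add_mul_add_mul_mem hn 0 k using 1
  push_cast; ring

theorem BSet_eq_setOf_maxShift_le (hA : IsSemiModule m h A) (hh : 0 < h) {v : ℕ}
    (hmv : m ≤ (v + 1) * h) :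
    BSet ((v + 1) * h - m : ℕ) A = {a ∈ A | maxShift m h A a ≤ v} := by
  ext a
  refine and_congr_right fun ha => ?_
  rw [hA.maxShift_le_iff hh ha]
  push_cast [hmv]
  ring_nf

end IsSemiModule

theorem eq_of_forall_le_of_encard_setOf_le {α : Type*} {A : Set α} {φ : α → WithBot ℕ}
    {ψ : α → ℕ} (hφ : ∀ a ∈ A, φ a ≠ ⊥) (hφψ : ∀ a ∈ A, φ a ≤ ψ a)
    (hfin : ∀ w : ℕ, {a ∈ A | φ a ≤ w}.Finite)
    (hcard : ∀ w : ℕ, {a ∈ A | φ a ≤ w}.encard ≤ {a ∈ A | ψ a ≤ w}.encard) :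
    ∀ a ∈ A, φ a = ψ a := by
  intro a ha
  obtain ⟨w, hw⟩ := WithBot.ne_bot_iff_exists.mp (hφ a ha)
  have hsub : {a ∈ A | ψ a ≤ w} ⊆ {a ∈ A | φ a ≤ w} :=
    fun x ⟨hx, hxw⟩ => ⟨hx, (hφψ x hx).trans (by exact_mod_cast hxw)⟩
  have heq := (hfin w).eq_of_subset_of_encard_le' hsub (hcard w)
  have haw : a ∈ {a ∈ A | ψ a ≤ w} := by rw [heq]; exact ⟨ha, hw.ge⟩
  refine le_antisymm (hφψ a ha) ?_
  rw [← hw]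
  exact WithBot.coe_le_coe.mpr haw.2

theorem encard_setOf_le_of_seq {ι : Type*} [Fintype ι] {A : Set ℤ} {φ : ℤ → WithBot ℕ}
    {seq : ι → ℕ → ℤ} (hseqA : ∀ l j, seq l j ∈ A)
    (huniq : ∀ a ∈ A, ∃! p : ι × ℕ, seq p.1 p.2 = a) {c : ι → ℕ}
    (hsucc : ∀ l j, φ (seq l (j + 1)) = φ (seq l j) + 1) (h0 : ∀ l, φ (seq l 0) = c l)
    (v : ℕ) : {a ∈ A | φ a ≤ v}.encard = (∑ l, (v + 1 - c l) : ℕ) := by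
  classical
  have hφ : ∀ l j, φ (seq l j) = (c l + j : ℕ) := by
    intro l j
    induction j with
    | zero => simpa using h0 l
    | succ j ih => rw [hsucc, ih]; push_cast; ring
  have hinj : Function.Injective fun p : (_ : ι) × ℕ => seq p.1 p.2 := fun p q hpq =>
    (Equiv.sigmaEquivProd ι ℕ).injective ((huniq _ (hseqA p.1 p.2)).unique rfl hpq.symm)
  set F := Finset.univ.sigma fun l => Finset.range (v + 1 - c l)
  have hset : {a ∈ A | φ a ≤ v} = F.image fun p => seq p.1 p.2 := by
    ext a
    simp only [Set.mem_ofPred_eq, Finset.coe_image, Set.mem_image, Finset.mem_coe, F,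
      Finset.mem_sigma, Finset.mem_univ, Finset.mem_range, true_and]
    constructor
    · rintro ⟨ha, hav⟩
      obtain ⟨⟨l, j⟩, rfl, -⟩ := huniq a ha
      rw [hφ] at hav
      have : c l + j ≤ v := by exact_mod_cast hav
      exact ⟨⟨l, j⟩, by show j < v + 1 - c l; omega, rfl⟩
    · rintro ⟨⟨l, j⟩, hj : j < v + 1 - c l, rfl⟩
      exact ⟨hseqA l j, by rw [hφ]; exact_mod_cast (by omega : c l + j ≤ v)⟩
  rw [hset, Set.encard_coe_eq_coe_finsetCard,
    Finset.card_image_of_injective _ hinj,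
    Finset.card_sigma]
  simp

theorem psum_eq_sum {h : ℕ} (μ : Fin h → ℕ) : psum μ h = ∑ i, μ i := by
  simp [psum]

theorem minuscule_implies_cyclic_general (m h : ℕ) (hh : 0 < h)
    (hcop : Nat.Coprime m h) (μ : Fin h → ℕ)
    (hmin : ∀ i, μ i ≤ 1) (hsum : psum μ h = m)
    (A : Set ℤ) (φ : ℤ → WithBot ℕ) (hext : IsExtSemiModule m h A φ μ) :
    IsCyclicExt m h A φ := by
  obtain ⟨hA, -, hbot, -, hle, -, seq, hseqA, hsequ, hsucc, -, σ, hseq0⟩ := hext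
  rw [psum_eq_sum] at hsum
  have hmh : m ≤ h := calc
    m = ∑ i, μ i := hsum.symm
    _ ≤ ∑ _i : Fin h, 1 := Finset.sum_le_sum fun i _ => hmin i
    _ = h := by simp
  -- minuscule: every `μ i ≤ w + 1`, so the count below has no truncation
  have hcount : ∀ w : ℕ, {a ∈ A | φ a ≤ w}.encard = ((w + 1) * h - m : ℕ) := by
    intro w
    rw [encard_setOf_le_of_seq hseqA hsequ hsucc hseq0, Equiv.sum_comp σ (fun i => w + 1 - μ i),
      Finset.sum_tsub_distrib _ fun i _ => (hmin i).trans (by omega), hsum]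
    simp [mul_comm]
  refine eq_of_forall_le_of_encard_setOf_le (fun a ha hφa => (hbot a).mp hφa ha) hle
    (fun w => Set.finite_of_encard_eq_coe (hcount w)) fun w => ?_
  have hmw : m ≤ (w + 1) * h := hmh.trans (Nat.le_mul_of_pos_left h w.succ_pos)
  obtain ⟨U, hU⟩ := hA.exists_forall_ge_mem hcop hh.ne'
  rw [hcount, ← hA.BSet_eq_setOf_maxShift_le hh hmw]
  exact le_encard_BSet hA.2.1 hU _

/-- if `μ` is dominant minuscule, every extended semi-module
for `μ` is cyclic. -/
theorem minuscule_implies_cyclic (m h : ℕ) (hm : 0 < m) (hh : 0 < h)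
    (hcop : Nat.Coprime m h) (μ : Fin h → ℕ) (hμ : Monotone μ)
    (hmin : ∀ i, μ i ≤ 1) (hsum : psum μ h = m)
    (A : Set ℤ) (φ : ℤ → WithBot ℕ) (hext : IsExtSemiModule m h A φ μ) :
    IsCyclicExt m h A φ :=
  minuscule_implies_cyclic_general m h hh hcop μ hmin hsum A φ hext
end

section
/- Let d(b, μ) = ⟨ρ, μ - ν⟩ - (h-1)/2 where ρ is the half-sum of positive roots of GL_h, ν = (m/h,...,m/h), and μ ∈ ℕ^h dominant with Σμᵢ = m, gcd(m,h)=1. Then d(b,μ) equals the number of lattice points (i, y) ∈ ℤ² with 1 ≤ i ≤ h-1 that lie on or below the line y = i·m/h and strictly above the polygon of μ (the piecewise linear function f: [0,h] → ℝ with f(0)=0 and slope μⱼ on [j-1, j]). -/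
/-!
Since `μ` is increasing, its polygon is convex and lies below the chord `y = i·m/h`
(Chebyshev's sum inequality), so column `i` contains exactly `⌊i·m/h⌋ - psum μ i` of the
counted lattice points. Comparing with `d(b,μ)` leaves `∑_{i<h} fract(i·m/h) - (h-1)/2`, which
vanishes because, `m` being prime to `h`, `i ↦ i·m mod h` permutes `{0, …, h-1}`.
-/

open Finset

lemma Monotone.mul_psum_le {h : ℕ} {μ : Fin h → ℕ} (hμ : Monotone μ) (i : ℕ) :
    h * psum μ i ≤ i * psum μ h := by
  set below : Fin h → ℕ := fun j ↦ if (j : ℕ) < i then 1 else 0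
  have hanti : Antivary μ below := by
    intro j k hjk
    simp only [below] at hjk
    split_ifs at hjk with hj hk <;> first | omega | exact hμ (Fin.le_def.2 (by omega))
  have hcard : ∑ j, below j ≤ i := by
    simp only [below, sum_boole, Nat.cast_id]
    calc #{j : Fin h | (j : ℕ) < i} ≤ #(range i) :=
          card_le_card_of_injOn (↑) (fun j hj ↦ by simpa using hj) Fin.val_injective.injOn
      _ = i := card_range i
  have htotal : psum μ h = ∑ j, μ j := by simp [psum]
  calc h * psum μ i = Fintype.card (Fin h) * ∑ j, μ j * below j := by
        simp [psum, below, mul_ite]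
    _ ≤ (∑ j, μ j) * ∑ j, below j := hanti.card_mul_sum_le_sum_mul_sum
    _ ≤ i * psum μ h := by rw [htotal, mul_comm]; gcongr

lemma Nat.Coprime.sum_range_mul_mod {m h : ℕ} (hcop : m.Coprime h) :
    ∑ i ∈ range h, i * m % h = ∑ i ∈ range h, i := by
  have hmaps : Set.MapsTo (· * m % h) (range h : Set ℕ) (range h) := fun i hi ↦
    mem_range.2 (Nat.mod_lt _ (by have := mem_range.1 hi; omega))
  have hinj : Set.InjOn (· * m % h) (range h : Set ℕ) := fun i hi j hj hij ↦ by
    have := Nat.ModEq.cancel_right_of_coprime (Nat.coprime_comm.1 hcop) hij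
    rwa [Nat.ModEq, Nat.mod_eq_of_lt (mem_range.1 hi), Nat.mod_eq_of_lt (mem_range.1 hj)] at this
  exact sum_nbij _ hmaps hinj (surjOn_of_injOn_of_card_le _ hmaps hinj le_rfl) fun _ _ ↦ rfl

lemma sum_range_fract_mul_div {K : Type*} [Field K] [LinearOrder K] [IsStrictOrderedRing K]
    [FloorRing K] {m h : ℕ} (hh : 0 < h) (hcop : m.Coprime h) :
    ∑ i ∈ range h, Int.fract ((i * m : K) / h) = (h - 1) / 2 := by
  have hgauss := congrArg (Nat.cast : ℕ → K) (sum_range_id_mul_two h)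
  have hh' : (h : K) ≠ 0 := by positivity
  simp_rw [← Nat.cast_mul, Int.fract_div_natCast_eq_div_natCast_mod, ← sum_div,
    ← Nat.cast_sum, hcop.sum_range_mul_mod]
  push_cast [Nat.cast_sub (Nat.one_le_iff_ne_zero.2 hh.ne')] at hgauss ⊢
  field_simp
  linear_combination hgauss

lemma ncard_lattice_points_between (S : Finset ℕ) (lo hi : ℕ → ℤ) (hle : ∀ i ∈ S, lo i ≤ hi i) :
    ({p : ℕ × ℤ | p.1 ∈ S ∧ lo p.1 < p.2 ∧ p.2 ≤ hi p.1}.ncard : ℤ) =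
      ∑ i ∈ S, (hi i - lo i) := by
  classical
  have hset : {p : ℕ × ℤ | p.1 ∈ S ∧ lo p.1 < p.2 ∧ p.2 ≤ hi p.1} =
      ↑(S.biUnion fun i ↦ {i} ×ˢ Ioc (lo i) (hi i)) := by
    ext ⟨i, y⟩
    simp [and_comm, and_assoc]
  have hdisj : (S : Set ℕ).PairwiseDisjoint fun i ↦ {i} ×ˢ Ioc (lo i) (hi i) :=
    fun i _ j _ hij ↦ disjoint_left.2 fun p hpi hpj ↦ hij <| by
      simp only [mem_product, mem_singleton] at hpi hpj; rw [← hpi.1, hpj.1]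
  rw [hset, Set.ncard_coe_finset, card_biUnion hdisj, Nat.cast_sum]
  refine sum_congr rfl fun i hiS ↦ ?_
  rw [card_product, card_singleton, one_mul, Int.card_Ioc_of_le _ _ (hle i hiS)]

lemma psum_le_floor_mul_div {m h : ℕ} (hh : 0 < h) {μ : Fin h → ℕ} (hμ : Monotone μ)
    (hsum : psum μ h = m) (i : ℕ) : (psum μ i : ℤ) ≤ ⌊(i * m : ℚ) / h⌋ := by
  rw [Int.le_floor, le_div_iff₀ (by positivity), Int.cast_natCast, ← hsum]
  exact_mod_cast (mul_comm (psum μ i) h).trans_le (hμ.mul_psum_le i)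

lemma dval_eq_sum_floor_sub_psum {m h : ℕ} (hh : 0 < h) (hcop : m.Coprime h) (μ : Fin h → ℕ) :
    dval m h μ = ((∑ i ∈ Ico 1 h, (⌊(i * m : ℚ) / h⌋ - psum μ i) : ℤ) : ℚ) := by
  have hfract := sum_range_fract_mul_div (K := ℚ) hh hcop
  calc dval m h μ
      = ∑ i ∈ range h, ((⌊(i * m : ℚ) / h⌋ - psum μ i : ℤ) : ℚ)
          + (∑ i ∈ range h, Int.fract ((i * m : ℚ) / h) - (h - 1) / 2) := by
        rw [dval, add_sub_assoc', ← sum_add_distrib]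
        congr 1
        refine sum_congr rfl fun i _ ↦ ?_
        push_cast
        linarith [Int.floor_add_fract ((i * m : ℚ) / h)]
    _ = ((∑ i ∈ Ico 1 h, (⌊(i * m : ℚ) / h⌋ - psum μ i) : ℤ) : ℚ) := by
        rw [hfract, sub_self, add_zero, range_eq_Ico, sum_eq_sum_Ico_succ_bot hh]
        simp [psum]

theorem dval_eq_lattice_points_general (m h : ℕ) (hh : 0 < h)
    (hcop : Nat.Coprime m h) (μ : Fin h → ℕ) (hμ : Monotone μ)
    (hsum : psum μ h = m) :
    dval m h μ =
      ({p : ℕ × ℤ | 1 ≤ p.1 ∧ p.1 ≤ h - 1 ∧ (p.2 : ℚ) ≤ (p.1 * m : ℚ) / h ∧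
          (psum μ p.1 : ℤ) < p.2}.ncard : ℚ) := by
  have hlattice : {p : ℕ × ℤ | 1 ≤ p.1 ∧ p.1 ≤ h - 1 ∧ (p.2 : ℚ) ≤ (p.1 * m : ℚ) / h ∧
      (psum μ p.1 : ℤ) < p.2} =
      {p : ℕ × ℤ | p.1 ∈ Ico 1 h ∧ (psum μ p.1 : ℤ) < p.2 ∧ p.2 ≤ ⌊(p.1 * m : ℚ) / h⌋} := by
    ext ⟨i, y⟩
    have hrange : i ≤ h - 1 ↔ i < h := by omega
    simp only [Set.mem_ofPred_eq, mem_Ico, Int.le_floor, hrange]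
    tauto
  rw [dval_eq_sum_floor_sub_psum hh hcop, hlattice,
    ← ncard_lattice_points_between _ _ _ fun i _ ↦ psum_le_floor_mul_div hh hμ hsum i]
  norm_cast

/-- `d(b,μ)` equals the number of lattice points `(i,y)` with
`1 ≤ i ≤ h-1`, lying on or below the line `y = i·m/h` and strictly above the
polygon of `μ`. -/
theorem dval_eq_lattice_points (m h : ℕ) (hm : 0 < m) (hh : 0 < h)
    (hcop : Nat.Coprime m h) (μ : Fin h → ℕ) (hμ : Monotone μ)
    (hsum : psum μ h = m) :
    dval m h μ =
      ({p : ℕ × ℤ | 1 ≤ p.1 ∧ p.1 ≤ h - 1 ∧ (p.2 : ℚ) ≤ (p.1 * m : ℚ) / h ∧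
          (psum μ p.1 : ℤ) < p.2}.ncard : ℚ) :=
  dval_eq_lattice_points_general m h hh hcop μ hμ hsum
end

section
/- Let A be a normalized semi-module for coprime m, h of type μ, where μ is dominant, and let (A, φ) be the associated cyclic extended semi-module (φ(a) = max{n : a+m-nh ∈ A} for a ∈ A, φ(a) = -∞ otherwise). Let B = {b₀,...,b_{h-1}} as in the type definition. Then the map (bᵢ, b) ↦ b - bᵢ + b_h is a bijection from 𝒱(A, φ) = {(a,b) ∈ A×A : b > a, φ(a) > φ(b) > φ(a-h)} onto {a ∈ ℤ : a > b₀, a ∉ A}. -/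
open Finset

lemma add_mul_mem_of_add_mem {h : ℤ} {A : Set ℤ} (hA : ∀ a ∈ A, a + h ∈ A) {a : ℤ}
    (ha : a ∈ A) (k : ℕ) : a + k * h ∈ A := by
  induction k with
  | zero => simpa using ha
  | succ k ih => simpa [add_mul, ← add_assoc] using hA _ ih

lemma mem_iff_le_of_mem_BSet {h : ℕ} {A : Set ℤ} (hA : ∀ a ∈ A, a + h ∈ A) {a x : ℤ}
    (ha : a ∈ BSet h A) (hx : (h : ℤ) ∣ x - a) : x ∈ A ↔ a ≤ x := by
  have hh : (0 : ℤ) < h := by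
    refine lt_of_le_of_ne (Nat.cast_nonneg h) fun h0 => ha.2 ?_
    simpa [← h0] using ha.1
  obtain ⟨q, hq⟩ := hx
  constructor
  · intro hxA
    by_contra! hlt
    lift -q - 1 to ℕ using (by nlinarith) with k hk
    refine ha.2 ?_
    convert add_mul_mem_of_add_mem hA hxA k using 1
    linear_combination -hq - (h : ℤ) * hk
  · intro hax
    lift q to ℕ using (by nlinarith) with k
    convert add_mul_mem_of_add_mem hA ha.1 k using 1
    linear_combination hq

lemma maxShift_eq_of_forall_mem_iff {m h : ℤ} {A : Set ℤ} {a : ℤ} {N : ℕ}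
    (H : ∀ n : ℕ, a + m - n * h ∈ A ↔ n ≤ N) : maxShift m h A a = N := by
  rw [maxShift, show {n : ℕ | a + m - n * h ∈ A} = Set.Iic N from Set.ext H, csSup_Iic]

lemma exists_lt_dvd_add_mul {m h : ℕ} [NeZero h] (hcop : Nat.Coprime m h) (x : ℤ) :
    ∃ d < h, (h : ℤ) ∣ x + d * m := by
  refine ⟨((-x : ZMod h) * (m : ZMod h)⁻¹).val, ZMod.val_lt _, ?_⟩
  rw [← ZMod.intCast_zmod_eq_zero_iff_dvd]
  push_cast
  rw [ZMod.natCast_zmod_val, mul_assoc, mul_comm _ (m : ZMod h), ZMod.coe_mul_inv_eq_one m hcop]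
  ring

lemma eq_and_eq_of_sub_mul_add_mul_eq {m h d₁ d₂ : ℕ} (hcop : Nat.Coprime m h) (hd₁ : d₁ < h)
    (hd₂ : d₂ < h) {x s₁ s₂ : ℤ} (H : x - d₁ * m + h * s₁ = x - d₂ * m + h * s₂) :
    d₁ = d₂ ∧ s₁ = s₂ := by
  have hdvd : (h : ℤ) ∣ ((d₁ : ℤ) - d₂) * m := ⟨s₁ - s₂, by linear_combination -H⟩
  have hd : (h : ℤ) ∣ (d₁ : ℤ) - d₂ :=
    (Nat.isCoprime_iff_coprime.2 hcop.symm).dvd_of_dvd_mul_right hdvd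
  have hd' : (d₁ : ℤ) - d₂ = 0 := Int.eq_zero_of_abs_lt_dvd hd (by rw [abs_lt]; omega)
  refine ⟨by omega, ?_⟩
  have hh : (h : ℤ) ≠ 0 := by omega
  exact mul_left_cancel₀ hh (by linear_combination H + (m : ℤ) * hd')

def windowSum (ν : ℕ → ℕ) (j d : ℕ) : ℕ := ∑ t ∈ range d, ν (j + t)

lemma windowSum_succ_add (ν : ℕ → ℕ) (j d : ℕ) :
    windowSum ν (j + 1) d + ν j = windowSum ν j d + ν (j + d) := by
  have h₁ := sum_range_succ (fun t => ν (j + t)) d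
  have h₂ := sum_range_succ' (fun t => ν (j + t)) d
  simp only [windowSum, add_zero, ← add_assoc, add_right_comm j _ 1] at h₁ h₂ ⊢
  omega

lemma windowSum_mono {ν : ℕ → ℕ} (hν : Monotone ν) (d : ℕ) : Monotone (windowSum ν · d) :=
  fun _ _ hij => sum_le_sum fun t _ => hν (by omega)

lemma Monotone.eq_of_mem_Ico_succ {f : ℕ → ℕ} (hf : Monotone f) {x i j : ℕ}
    (hi : x ∈ Set.Ico (f i) (f (i + 1))) (hj : x ∈ Set.Ico (f j) (f (j + 1))) : i = j := by
  by_contra hij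
  exact Set.disjoint_left.1 (hf.pairwise_disjoint_on_Ico_succ hij) (by simpa using hi)
    (by simpa using hj)

lemma exists_mem_Ico_succ {f : ℕ → ℕ} {x N : ℕ} (h₀ : f 0 ≤ x) (hN : x < f N) :
    ∃ j < N, x ∈ Set.Ico (f j) (f (j + 1)) := by
  induction N with
  | zero => omega
  | succ N ih =>
    by_cases hx : x < f N
    · obtain ⟨j, hj, hjx⟩ := ih hx
      exact ⟨j, by omega, hjx⟩
    · exact ⟨N, by omega, not_lt.1 hx, hN⟩

structure IsTypeSequence (m h : ℕ) (A : Set ℤ) (ν : ℕ → ℕ) (b : ℕ → ℤ) : Prop where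
  add_mem : ∀ a ∈ A, a + h ∈ A
  mem_BSet : ∀ i ≤ h, b i ∈ BSet h A
  zero_le : ∀ x ∈ BSet h A, b 0 ≤ x
  succ : ∀ i < h, b (i + 1) = b i + m - ν i * h

namespace IsTypeSequence

variable {m h : ℕ} {A : Set ℤ} {ν : ℕ → ℕ} {b : ℕ → ℤ} {φ : ℤ → WithBot ℕ}

lemma pos (hb : IsTypeSequence m h A ν b) : 0 < h := by
  have hb₀ := hb.mem_BSet 0 (Nat.zero_le h)
  refine Nat.pos_of_ne_zero fun h0 => hb₀.2 ?_
  simpa [h0] using hb₀.1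

lemma mem_iff_le (hb : IsTypeSequence m h A ν b) {i : ℕ} (hi : i ≤ h) {x : ℤ}
    (hx : (h : ℤ) ∣ x - b i) : x ∈ A ↔ b i ≤ x :=
  mem_iff_le_of_mem_BSet hb.add_mem (hb.mem_BSet i hi) hx

lemma apply_eq_sum (hb : IsTypeSequence m h A ν b) :
    ∀ i ≤ h, b i = b 0 + i * m - h * ∑ t ∈ range i, ν t
  | 0, _ => by simp
  | i + 1, hi => by
    rw [hb.succ i hi, hb.apply_eq_sum i (by omega), sum_range_succ]
    push_cast
    ring

lemma apply_h_eq_apply_zero (hb : IsTypeSequence m h A ν b) : b h = b 0 := by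
  have e := hb.apply_eq_sum h le_rfl
  set P : ℤ := ((∑ t ∈ range h, ν t : ℕ) : ℤ)
  have h₁ := (hb.mem_iff_le le_rfl (x := b 0) ⟨P - m, by linear_combination -e⟩).1
    (hb.mem_BSet 0 (Nat.zero_le h)).1
  have h₂ := (hb.mem_iff_le (Nat.zero_le h) (x := b h) ⟨m - P, by linear_combination e⟩).1
    (hb.mem_BSet h le_rfl).1
  exact le_antisymm h₁ h₂

lemma sum_range_eq (hb : IsTypeSequence m h A ν b) : ∑ t ∈ range h, ν t = m := by
  have e := hb.apply_eq_sum h le_rfl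
  rw [hb.apply_h_eq_apply_zero] at e
  have hh : (h : ℤ) ≠ 0 := by have := hb.pos; omega
  have : (h : ℤ) * (∑ t ∈ range h, ν t : ℕ) = h * m := by linear_combination e
  exact_mod_cast mul_left_cancel₀ hh this

lemma exists_dvd_sub (hb : IsTypeSequence m h A ν b) (hcop : Nat.Coprime m h) (x : ℤ) :
    ∃ i < h, (h : ℤ) ∣ x - b i := by
  have : NeZero h := ⟨hb.pos.ne'⟩
  obtain ⟨i, hi, q, hq⟩ := exists_lt_dvd_add_mul hcop (b 0 - x)
  exact ⟨i, hi, ⟨(∑ t ∈ range i, ν t : ℤ) - q, by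
    rw [hb.apply_eq_sum i hi.le]; push_cast; linear_combination -hq⟩⟩

lemma exists_eq_add_mul (hb : IsTypeSequence m h A ν b) (hcop : Nat.Coprime m h) {a : ℤ}
    (ha : a ∈ A) : ∃ j < h, ∃ k : ℕ, a = b j + k * h := by
  obtain ⟨j, hj, q, hq⟩ := hb.exists_dvd_sub hcop a
  have hle := (hb.mem_iff_le hj.le ⟨q, hq⟩).1 ha
  have hh : (0 : ℤ) < h := by exact_mod_cast hb.pos
  lift q to ℕ using (by nlinarith) with k
  exact ⟨j, hj, k, by linear_combination hq⟩

lemma maxShift_add_mul (hb : IsTypeSequence m h A ν b) {j : ℕ} (hj : j < h) (k : ℕ) :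
    maxShift m h A (b j + k * h) = ν j + k := by
  refine maxShift_eq_of_forall_mem_iff fun n => ?_
  have e : b j + k * h + m - n * h - b (j + 1) = (((ν j + k : ℕ) : ℤ) - n) * h := by
    rw [hb.succ j hj]; push_cast; ring
  have hh : (0 : ℤ) < h := by exact_mod_cast hb.pos
  rw [hb.mem_iff_le hj ⟨_, by rw [e, mul_comm]⟩, ← sub_nonneg, e,
    mul_nonneg_iff_of_pos_right hh, sub_nonneg, Nat.cast_le]

lemma sub_add_apply_h_eq (hb : IsTypeSequence m h A ν b) {j d : ℕ} (hjd : j + d ≤ h) (k : ℕ) :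
    b j + k * h - b (j + d) + b h = b 0 - d * m + h * ((windowSum ν j d + k : ℕ) : ℤ) := by
  rw [hb.apply_h_eq_apply_zero, hb.apply_eq_sum j (by omega), hb.apply_eq_sum (j + d) hjd,
    sum_range_add, windowSum]
  push_cast
  ring

lemma mem_iff_windowSum_le (hb : IsTypeSequence m h A ν b) {d : ℕ} (hd : d ≤ h) (s : ℤ) :
    b 0 - d * m + h * s ∈ A ↔ (windowSum ν (h - d) d : ℤ) ≤ s := by
  have hsum := hb.sum_range_eq
  rw [← Nat.sub_add_cancel hd, sum_range_add] at hsum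
  have e : b 0 - d * m + h * s - b (h - d) = h * (s - windowSum ν (h - d) d) := by
    rw [hb.apply_eq_sum (h - d) (Nat.sub_le h d), windowSum, ← hsum]
    push_cast [hd]
    ring
  have hh : (0 : ℤ) < h := by exact_mod_cast hb.pos
  rw [hb.mem_iff_le (Nat.sub_le h d) ⟨_, e⟩, ← sub_nonneg, e, mul_nonneg_iff_of_pos_left hh,
    sub_nonneg]

lemma mem_Vset_iff (hb : IsTypeSequence m h A ν b) (hν : Monotone ν) (hcop : Nat.Coprime m h)
    (hφA : IsCyclicExt m h A φ) (hφ : ∀ a ∉ A, φ a = ⊥) {p : ℤ × ℤ} :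
    p ∈ Vset h A φ ↔ ∃ j d k : ℕ, j + d < h ∧ ν j + k < ν (j + d) ∧
      b (j + d) < b j + k * h ∧ p = (b (j + d), b j + k * h) := by
  have hφb : ∀ j < h, ∀ k : ℕ, φ (b j + k * h) = ((ν j + k : ℕ) : WithBot ℕ) := fun j hj k => by
    rw [hφA _ (add_mul_mem_of_add_mem hb.add_mem (hb.mem_BSet j hj.le).1 k),
      hb.maxShift_add_mul hj]
  constructor
  · rintro ⟨hp₁, hp₂, hlt, hφ₁, hφ₂⟩
    obtain ⟨i, hi, k₁, e₁⟩ := hb.exists_eq_add_mul hcop hp₁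
    obtain ⟨j, hj, k, e₂⟩ := hb.exists_eq_add_mul hcop hp₂
    rw [e₁, e₂, hφb i hi, hφb j hj, Nat.cast_lt] at hφ₁
    have hk₁ : k₁ = 0 := by
      by_contra hk₁
      obtain ⟨k', rfl⟩ := Nat.exists_eq_succ_of_ne_zero hk₁
      have e₃ : p.1 - h = b i + k' * h := by rw [e₁]; push_cast; ring
      rw [e₃, e₂, hφb i hi, hφb j hj, Nat.cast_lt] at hφ₂
      omega
    subst hk₁
    have hji : j ≤ i := by
      by_contra! hij
      have := hν hij.le
      omega
    obtain ⟨d, rfl⟩ := Nat.exists_eq_add_of_le hji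
    exact ⟨j, d, k, hi, hφ₁, by simpa [e₁, e₂] using hlt, Prod.ext (by simpa using e₁) e₂⟩
  · rintro ⟨j, d, k, hjd, hk, hlt, rfl⟩
    have hφ₁ := hφb (j + d) hjd 0
    simp only [Nat.cast_zero, zero_mul, add_zero] at hφ₁
    refine ⟨(hb.mem_BSet _ hjd.le).1,
      add_mul_mem_of_add_mem hb.add_mem (hb.mem_BSet j (by omega)).1 k, hlt, ?_, ?_⟩
    · rw [hφ₁, hφb j (by omega), Nat.cast_lt]
      exact hk
    · rw [hφ _ (hb.mem_BSet _ hjd.le).2, hφb j (by omega)]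
      exact WithBot.bot_lt_coe _

lemma mapsTo_Vset (hb : IsTypeSequence m h A ν b) (hν : Monotone ν) (hcop : Nat.Coprime m h)
    (hφA : IsCyclicExt m h A φ) (hφ : ∀ a ∉ A, φ a = ⊥) :
    Set.MapsTo (fun p : ℤ × ℤ => p.2 - p.1 + b h) (Vset h A φ) {a : ℤ | b 0 < a ∧ a ∉ A} := by
  intro _ hp
  obtain ⟨j, d, k, hjd, hk, hlt, rfl⟩ := (hb.mem_Vset_iff hν hcop hφA hφ).1 hp
  refine ⟨by rw [hb.apply_h_eq_apply_zero]; linarith, ?_⟩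
  dsimp only
  rw [hb.sub_add_apply_h_eq hjd.le, hb.mem_iff_windowSum_le (by omega), not_le, Nat.cast_lt]
  calc windowSum ν j d + k < windowSum ν (j + 1) d := by
        have := windowSum_succ_add ν j d; omega
    _ ≤ windowSum ν (h - d) d := windowSum_mono hν d (by omega)

lemma injOn_Vset (hb : IsTypeSequence m h A ν b) (hν : Monotone ν) (hcop : Nat.Coprime m h)
    (hφA : IsCyclicExt m h A φ) (hφ : ∀ a ∉ A, φ a = ⊥) :
    Set.InjOn (fun p : ℤ × ℤ => p.2 - p.1 + b h) (Vset h A φ) := by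
  intro _ hp _ hq heq
  obtain ⟨j, d, k, hjd, hk, -, rfl⟩ := (hb.mem_Vset_iff hν hcop hφA hφ).1 hp
  obtain ⟨j', d', k', hjd', hk', -, rfl⟩ := (hb.mem_Vset_iff hν hcop hφA hφ).1 hq
  simp only [hb.sub_add_apply_h_eq hjd.le, hb.sub_add_apply_h_eq hjd'.le] at heq
  obtain ⟨rfl, hs⟩ := eq_and_eq_of_sub_mul_add_mul_eq hcop (by omega) (by omega) heq
  have hW := windowSum_succ_add ν j d
  have hW' := windowSum_succ_add ν j' d
  obtain rfl : j = j' := (windowSum_mono hν d).eq_of_mem_Ico_succ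
    (x := windowSum ν j d + k) ⟨by omega, by omega⟩ ⟨by omega, by omega⟩
  obtain rfl : k = k' := by omega
  rfl

lemma surjOn_Vset (hb : IsTypeSequence m h A ν b) (hν : Monotone ν) (hcop : Nat.Coprime m h)
    (hφA : IsCyclicExt m h A φ) (hφ : ∀ a ∉ A, φ a = ⊥) :
    Set.SurjOn (fun p : ℤ × ℤ => p.2 - p.1 + b h) (Vset h A φ) {a : ℤ | b 0 < a ∧ a ∉ A} := by
  have : NeZero h := ⟨hb.pos.ne'⟩
  rintro y ⟨hy₀, hyA⟩
  obtain ⟨d, hd, s, hs⟩ := exists_lt_dvd_add_mul hcop (y - b 0)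
  obtain rfl : y = b 0 - d * m + h * s := by linear_combination hs
  rw [hb.mem_iff_windowSum_le hd.le, not_le] at hyA
  have hbd := hb.zero_le _ (hb.mem_BSet d hd.le)
  rw [hb.apply_eq_sum d hd.le] at hbd
  have hh : (0 : ℤ) < h := by exact_mod_cast hb.pos
  have hs₀ : (windowSum ν 0 d : ℤ) ≤ s := by
    simp only [windowSum, zero_add]
    nlinarith
  lift s to ℕ using by omega
  obtain ⟨j, hj, hjs, hsj⟩ := exists_mem_Ico_succ (f := (windowSum ν · d)) (x := s)
    (by exact_mod_cast hs₀) (by exact_mod_cast hyA)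
  obtain ⟨k, rfl⟩ := Nat.exists_eq_add_of_le hjs
  have himage := hb.sub_add_apply_h_eq (j := j) (d := d) (by omega) k
  refine ⟨(b (j + d), b j + k * h),
    (hb.mem_Vset_iff hν hcop hφA hφ).2 ⟨j, d, k, by omega, ?_, ?_, rfl⟩, himage⟩
  · have := windowSum_succ_add ν j d
    omega
  · rw [hb.apply_h_eq_apply_zero] at himage
    linarith

end IsTypeSequence

/-- Extending by the last entry (rather than by `0`) keeps a monotone `μ` monotone. -/
def extendLast {h : ℕ} [NeZero h] (μ : Fin h → ℕ) (t : ℕ) : ℕ :=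
  μ ⟨min t (h - 1), by have := NeZero.pos h; omega⟩

lemma extendLast_of_lt {h : ℕ} [NeZero h] (μ : Fin h → ℕ) {t : ℕ} (ht : t < h) :
    extendLast μ t = μ ⟨t, ht⟩ := by
  simp only [extendLast, min_eq_left (Nat.le_sub_one_of_lt ht)]

lemma Monotone.extendLast {h : ℕ} [NeZero h] {μ : Fin h → ℕ} (hμ : Monotone μ) :
    Monotone (extendLast μ) :=
  fun _ _ hst => hμ (Fin.mk_le_mk.2 (min_le_min_right _ hst))

lemma isTypeSequence_extendLast {m h : ℕ} [NeZero h] {A : Set ℤ} {μ : Fin h → ℕ} {b : ℕ → ℤ}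
    (hA : ∀ a ∈ A, a + h ∈ A) (hb0 : b 0 ∈ BSet h A) (hb0min : ∀ x ∈ BSet h A, b 0 ≤ x)
    (hrec : ∀ i : Fin h,
      b (i + 1) = b i + m - μ i * h ∧ b (i + 1) ∈ A ∧ b i + m - (μ i + 1) * h ∉ A) :
    IsTypeSequence m h A (extendLast μ) b where
  add_mem := hA
  mem_BSet
    | 0, _ => hb0
    | i + 1, hi => by
      obtain ⟨e, hmem, hnot⟩ := hrec ⟨i, hi⟩
      refine ⟨hmem, fun hmem' => hnot ?_⟩
      convert hmem' using 1
      rw [e]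
      push_cast
      ring
  zero_le := hb0min
  succ i hi := by rw [extendLast_of_lt μ hi]; exact (hrec ⟨i, hi⟩).1

theorem cyclic_V_bijection_general (m h : ℕ) (hh : 0 < h)
    (hcop : Nat.Coprime m h) (μ : Fin h → ℕ) (hμ : Monotone μ)
    (A : Set ℤ) (hA : IsSemiModule m h A)
    (b : ℕ → ℤ)
    (hb0 : b 0 ∈ BSet h A) (hb0min : ∀ x ∈ BSet h A, b 0 ≤ x)
    (hrec : ∀ i : Fin h,
      b (i + 1) = b i + m - μ i * h ∧ b (i + 1) ∈ A ∧
        b i + m - (μ i + 1) * h ∉ A)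
    (φ : ℤ → WithBot ℕ)
    (hφ : ∀ a : ℤ, (a ∈ A → φ a = (maxShift m h A a : WithBot ℕ)) ∧
      (a ∉ A → φ a = ⊥)) :
    Set.BijOn (fun p : ℤ × ℤ => p.2 - p.1 + b h) (Vset h A φ)
      {a : ℤ | b 0 < a ∧ a ∉ A} := by
  have : NeZero h := ⟨hh.ne'⟩
  have hb := isTypeSequence_extendLast hA.2.2.2 hb0 hb0min hrec
  have hφA : IsCyclicExt m h A φ := fun a ha => (hφ a).1 ha
  have hφ' : ∀ a ∉ A, φ a = ⊥ := fun a ha => (hφ a).2 ha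
  exact ⟨hb.mapsTo_Vset hμ.extendLast hcop hφA hφ', hb.injOn_Vset hμ.extendLast hcop hφA hφ',
    hb.surjOn_Vset hμ.extendLast hcop hφA hφ'⟩

/-- for the cyclic extended semi-module associated to a
normalized semi-module of dominant type `μ`, the map `(bᵢ, b) ↦ b - bᵢ + b_h`
is a bijection from `𝒱(A,φ)` onto `{a ∈ ℤ | a > b₀, a ∉ A}`. -/
theorem cyclic_V_bijection (m h : ℕ) (hm : 0 < m) (hh : 0 < h)
    (hcop : Nat.Coprime m h) (μ : Fin h → ℕ) (hμ : Monotone μ)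
    (A : Set ℤ) (hA : IsSemiModule m h A) (hnorm : IsNormalized h A)
    (b : ℕ → ℤ)
    (hb0 : b 0 ∈ BSet h A) (hb0min : ∀ x ∈ BSet h A, b 0 ≤ x)
    (hrec : ∀ i : Fin h,
      b (i + 1) = b i + m - μ i * h ∧ b (i + 1) ∈ A ∧
        b i + m - (μ i + 1) * h ∉ A)
    (φ : ℤ → WithBot ℕ)
    (hφ : ∀ a : ℤ, (a ∈ A → φ a = (maxShift m h A a : WithBot ℕ)) ∧
      (a ∉ A → φ a = ⊥)) :
    Set.BijOn (fun p : ℤ × ℤ => p.2 - p.1 + b h) (Vset h A φ)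
      {a : ℤ | b 0 < a ∧ a ∉ A} :=
  cyclic_V_bijection_general m h hh hcop μ hμ A hA b hb0 hb0min hrec φ hφ
end
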